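/- Let G = (V, E) be a connected k-uniform hypergraph with edges e, f as in the edge-switching operation G' = G⟨U_1 ⇌ V_1⟩ (swapping U_1 ⊆ e with V_1 ⊆ f, |U_1| = |V_1| = r, 1 ≤ r ≤ k−1), with G' connected. Let X be the positive unit principal eigenvector of G, and suppose x_{U_1} > x_{V_1} and x_{U_2} < x_{V_2}, where U_2 = e \ U_1, V_2 = f \ V_1, and x_S denotes the sum of entries of X over S. Then ρ(G) < ρ(G'). -/

import Mathlib

open Matrix BigOperators

/-- A hypergraph on vertex set `Fin n`: a set of edges, each an at-least-2-element
vertex subset. -/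
structure FinHypergraph (n : ℕ) where
  edges : Finset (Finset (Fin n))
  two_le_card : ∀ e ∈ edges, 2 ≤ e.card

namespace FinHypergraph

variable {n : ℕ}

/-- The adjacency matrix `(A_G)_{ij} = Σ_{e ∋ i,j} 1/(|e|-1)` for `i ≠ j`, zero diagonal. -/
noncomputable def adjMat (G : FinHypergraph n) : Matrix (Fin n) (Fin n) ℝ :=
  fun i j => if i = j then 0 else
    ∑ e ∈ G.edges.filter (fun e => i ∈ e ∧ j ∈ e), (1 : ℝ) / ((e.card : ℝ) - 1)

/-- `G` is `k`-uniform if every edge has exactly `k` vertices. -/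
def IsUniform (G : FinHypergraph n) (k : ℕ) : Prop := ∀ e ∈ G.edges, e.card = k

/-- Degree of a vertex: the number of edges containing it. -/
def degree (G : FinHypergraph n) (v : Fin n) : ℕ := (G.edges.filter (fun e => v ∈ e)).card

/-- Connectivity: any two vertices are linked by a walk of overlapping edges. -/
def Connected (G : FinHypergraph n) : Prop :=
  ∀ i j : Fin n, Relation.ReflTransGen (fun a b => ∃ e ∈ G.edges, a ∈ e ∧ b ∈ e) i j

/-- Every vertex lies in some edge (no isolated vertices, so the order is `n`). -/
def Covers (G : FinHypergraph n) : Prop := ∀ v : Fin n, ∃ e ∈ G.edges, v ∈ e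

/-- A pendant edge attached at `v`: all its vertices other than `v` have degree 1. -/
def IsPendantAt (G : FinHypergraph n) (e : Finset (Fin n)) (v : Fin n) : Prop :=
  e ∈ G.edges ∧ v ∈ e ∧ ∀ u ∈ e, u ≠ v → G.degree u = 1

/-- `v, e` (indices modulo `q`) form a hypercycle of length `q ≥ 2` in `G`:
distinct vertices, distinct edges, `v i, v (i+1) ∈ e i`, consecutive edges meet
exactly in the shared vertex (when `q ≥ 3`), non-consecutive edges are disjoint. -/
def IsCycle (G : FinHypergraph n) (q : ℕ) (v : ℕ → Fin n) (e : ℕ → Finset (Fin n)) : Prop :=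
  2 ≤ q ∧
  (∀ i < q, ∀ j < q, v i = v j → i = j) ∧
  (∀ i < q, ∀ j < q, e i = e j → i = j) ∧
  (∀ i < q, e i ∈ G.edges) ∧
  (∀ i < q, v i ∈ e i ∧ v ((i + 1) % q) ∈ e i) ∧
  (3 ≤ q → ∀ i < q, e i ∩ e ((i + 1) % q) = {v ((i + 1) % q)}) ∧
  (∀ i < q, ∀ j < q, i ≠ j → (i + 1) % q ≠ j → (j + 1) % q ≠ i → e i ∩ e j = ∅)

/-- `G` contains a hypercycle. -/
def HasCycle (G : FinHypergraph n) : Prop :=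
  ∃ (q : ℕ) (v : ℕ → Fin n) (e : ℕ → Finset (Fin n)), IsCycle G q v e

end FinHypergraph

open FinHypergraph

/-- `G` is a `k`-uniform unicyclic hypergraph of order `n`: connected with
`n - 1 = (k-1)m - 1`. -/
def IsUnicyclic (k : ℕ) {n : ℕ} (G : FinHypergraph n) : Prop :=
  G.IsUniform k ∧ G.Connected ∧
    (n : ℤ) - 1 = ((k : ℤ) - 1) * (G.edges.card : ℤ) - 1

/-- Isomorphism of two hypergraphs on the same vertex set. -/
def Isomorphic {n : ℕ} (G H : FinHypergraph n) : Prop :=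
  ∃ σ : Equiv.Perm (Fin n), ∀ e : Finset (Fin n), e ∈ G.edges ↔ e.image σ ∈ H.edges

/-- The permutation matrix of `σ`, so that `(P_σ X) i = X (σ⁻¹ i)`. -/
def permMat {n : ℕ} (σ : Equiv.Perm (Fin n)) : Matrix (Fin n) (Fin n) ℝ :=
  fun i j => if σ j = i then 1 else 0

/-- `σ` is an automorphism of `G`. -/
def IsAuto {n : ℕ} (G : FinHypergraph n) (σ : Equiv.Perm (Fin n)) : Prop :=
  ∀ e : Finset (Fin n), e ∈ G.edges ↔ e.image σ ∈ G.edges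

/-- The spectral radius of a real matrix: the largest modulus of a (real) eigenvalue. -/
noncomputable def specRad {n : ℕ} (A : Matrix (Fin n) (Fin n) ℝ) : ℝ :=
  ⨆ μ : spectrum ℝ A, |(μ : ℝ)|

/-- The hypergraph `U*`: a 2-hypercycle on `v₁, v₂` (two edges meeting exactly in
`{v₁, v₂}`) with all remaining edges pendant edges attached at `v₁`. -/
def IsUstar (k : ℕ) {n : ℕ} (G : FinHypergraph n) : Prop :=
  G.IsUniform k ∧ G.Covers ∧
  ∃ v1 v2 : Fin n, v1 ≠ v2 ∧ ∃ e1 ∈ G.edges, ∃ e2 ∈ G.edges, e1 ≠ e2 ∧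
    e1 ∩ e2 = {v1, v2} ∧
    ∀ e ∈ G.edges, e ≠ e1 → e ≠ e2 → G.IsPendantAt e v1

/-- The hypergraph `F`: a 2-hypercycle on `v₁, v₂`, one pendant edge at `v₂`,
all remaining edges pendant at `v₁`. -/
def IsF (k : ℕ) {n : ℕ} (G : FinHypergraph n) : Prop :=
  G.IsUniform k ∧ G.Covers ∧
  ∃ v1 v2 : Fin n, v1 ≠ v2 ∧ ∃ e1 ∈ G.edges, ∃ e2 ∈ G.edges, e1 ≠ e2 ∧
    e1 ∩ e2 = {v1, v2} ∧
    ∃ f ∈ G.edges, f ≠ e1 ∧ f ≠ e2 ∧ G.IsPendantAt f v2 ∧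
      ∀ e ∈ G.edges, e ≠ e1 → e ≠ e2 → e ≠ f → G.IsPendantAt e v1

/-- The hypergraph `F₁`: a 2-hypercycle on `v₁, v₂`, all remaining edges pendant at
a vertex `η ∈ e₂ \ {v₁, v₂}`. -/
def IsF1 (k : ℕ) {n : ℕ} (G : FinHypergraph n) : Prop :=
  G.IsUniform k ∧ G.Covers ∧
  ∃ v1 v2 η : Fin n, v1 ≠ v2 ∧ ∃ e1 ∈ G.edges, ∃ e2 ∈ G.edges, e1 ≠ e2 ∧
    e1 ∩ e2 = {v1, v2} ∧ η ∈ e2 ∧ η ≠ v1 ∧ η ≠ v2 ∧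
    ∀ e ∈ G.edges, e ≠ e1 → e ≠ e2 → G.IsPendantAt e η

/-- The hypergraph `F₂`: a 2-hypercycle on `v₁, v₂`, one pendant edge at `v₁`, all
remaining edges pendant at a vertex `η ∈ e₂ \ {v₁, v₂}`. -/
def IsF2 (k : ℕ) {n : ℕ} (G : FinHypergraph n) : Prop :=
  G.IsUniform k ∧ G.Covers ∧
  ∃ v1 v2 η : Fin n, v1 ≠ v2 ∧ ∃ e1 ∈ G.edges, ∃ e2 ∈ G.edges, e1 ≠ e2 ∧
    e1 ∩ e2 = {v1, v2} ∧ η ∈ e2 ∧ η ≠ v1 ∧ η ≠ v2 ∧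
    ∃ f ∈ G.edges, f ≠ e1 ∧ f ≠ e2 ∧ G.IsPendantAt f v1 ∧
      ∀ e ∈ G.edges, e ≠ e1 → e ≠ e2 → e ≠ f → G.IsPendantAt e η

/-- The hypergraph `F₃`: a 2-hypercycle on `v₁, v₂`, one pendant edge at a vertex
`η ∈ e₂ \ {v₁, v₂}`, all remaining edges pendant at `v₁`. -/
def IsF3 (k : ℕ) {n : ℕ} (G : FinHypergraph n) : Prop :=
  G.IsUniform k ∧ G.Covers ∧
  ∃ v1 v2 η : Fin n, v1 ≠ v2 ∧ ∃ e1 ∈ G.edges, ∃ e2 ∈ G.edges, e1 ≠ e2 ∧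
    e1 ∩ e2 = {v1, v2} ∧ η ∈ e2 ∧ η ≠ v1 ∧ η ≠ v2 ∧
    ∃ f ∈ G.edges, f ≠ e1 ∧ f ≠ e2 ∧ G.IsPendantAt f η ∧
      ∀ e ∈ G.edges, e ≠ e1 → e ≠ e2 → e ≠ f → G.IsPendantAt e v1

/-- The hypergraph `F_(R;S;T)`: a 2-hypercycle on `v₁, v₂` with every remaining edge
a pendant edge attached at some vertex of `e₁ ∪ e₂`. -/
def IsFRST (k : ℕ) {n : ℕ} (G : FinHypergraph n) : Prop :=
  G.IsUniform k ∧ G.Covers ∧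
  ∃ v1 v2 : Fin n, v1 ≠ v2 ∧ ∃ e1 ∈ G.edges, ∃ e2 ∈ G.edges, e1 ≠ e2 ∧
    e1 ∩ e2 = {v1, v2} ∧
    ∀ e ∈ G.edges, e ≠ e1 → e ≠ e2 → ∃ w ∈ e1 ∪ e2, G.IsPendantAt e w


section Aux
open FinHypergraph

lemma adj_isHermitian {n : ℕ} (H : FinHypergraph n) : (H.adjMat).IsHermitian := by
  ext i j
  simp only [Matrix.conjTranspose_apply, star_trivial, FinHypergraph.adjMat]
  by_cases h : i = j
  · simp [h]
  · simp only [h, Ne.symm h, if_false]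
    congr 1
    exact Finset.filter_congr fun g _ => by simp [and_comm]

lemma rayleigh_le_specRad {n : ℕ} (B : Matrix (Fin n) (Fin n) ℝ) (hB : B.IsHermitian)
    (X : Fin n → ℝ) (hX : ∑ i, X i ^ 2 = 1) :
    X ⬝ᵥ (B *ᵥ X) ≤ ⨆ μ : spectrum ℝ B, |(μ : ℝ)| := by
  set S := ⨆ μ : spectrum ℝ B, |(μ : ℝ)| with hS
  have hbdd : BddAbove (Set.range fun μ : spectrum ℝ B => |(μ : ℝ)|) :=
    Set.Finite.bddAbove (Set.finite_range _)
  have hle : ∀ j : Fin n, hB.eigenvalues j ≤ S := by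
    intro j
    calc hB.eigenvalues j ≤ |hB.eigenvalues j| := le_abs_self _
    _ ≤ S := le_ciSup hbdd (⟨_, hB.eigenvalues_mem_spectrum_real j⟩ : spectrum ℝ B)
  set b := hB.eigenvectorBasis with hb
  set x : EuclideanSpace ℝ (Fin n) := WithLp.toLp 2 X with hx
  have hsym : Bᵀ = B := hB
  have hinner : ∀ u v : EuclideanSpace ℝ (Fin n), (inner ℝ u v : ℝ) = (u : Fin n → ℝ) ⬝ᵥ v := by
    intro u v
    simp [PiLp.inner_apply, dotProduct, RCLike.inner_apply, mul_comm]
  have hbx : ∀ j, (inner ℝ (b j) (WithLp.toLp 2 (B *ᵥ X : Fin n → ℝ)) : ℝ)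
      = hB.eigenvalues j * (inner ℝ (b j) x : ℝ) := by
    intro j
    rw [hinner, hinner]
    show (b j : Fin n → ℝ) ⬝ᵥ (B *ᵥ X) = _
    rw [dotProduct_mulVec, ← Matrix.mulVec_transpose, hsym]
    show (B *ᵥ ⇑(b j)) ⬝ᵥ X = _
    rw [hb, hB.mulVec_eigenvectorBasis]
    rw [smul_dotProduct, smul_eq_mul]
  have h2 : ∑ j, (inner ℝ (b j) x : ℝ)^2 = 1 := by
    have key := b.sum_inner_mul_inner x x
    rw [hinner] at key
    calc ∑ j, (inner ℝ (b j) x : ℝ)^2 = ∑ j, (inner ℝ x (b j) : ℝ) * inner ℝ (b j) x := by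
          refine Finset.sum_congr rfl fun j _ => ?_
          rw [sq, real_inner_comm]
    _ = (x : Fin n → ℝ) ⬝ᵥ x := key
    _ = 1 := by rw [← hX]; simp [dotProduct, sq, hx]
  have h1 : X ⬝ᵥ (B *ᵥ X) = ∑ j, hB.eigenvalues j * (inner ℝ (b j) x : ℝ)^2 := by
    have key := b.sum_inner_mul_inner x (WithLp.toLp 2 (B *ᵥ X : Fin n → ℝ))
    rw [hinner] at key
    rw [show (x : Fin n → ℝ) ⬝ᵥ _ = X ⬝ᵥ (B *ᵥ X) from rfl] at key
    rw [← key]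
    refine Finset.sum_congr rfl fun j _ => ?_
    rw [hbx j, real_inner_comm x (b j)]
    ring
  rw [h1]
  calc ∑ j, hB.eigenvalues j * (inner ℝ (b j) x : ℝ)^2
      ≤ ∑ j, S * (inner ℝ (b j) x : ℝ)^2 :=
        Finset.sum_le_sum fun j _ => mul_le_mul_of_nonneg_right (hle j) (sq_nonneg _)
  _ = S := by rw [← Finset.mul_sum, h2, mul_one]

lemma quadform {n k : ℕ} (H : FinHypergraph n) (hH : H.IsUniform k) (X : Fin n → ℝ) :
    X ⬝ᵥ (H.adjMat *ᵥ X) =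
      ∑ g ∈ H.edges, (((∑ v ∈ g, X v)^2 - ∑ v ∈ g, X v^2) / ((k:ℝ) - 1)) := by
  have step1 : X ⬝ᵥ (H.adjMat *ᵥ X)
      = ∑ i, ∑ j, ∑ g ∈ H.edges,
          (if i ∈ g ∧ j ∈ g ∧ i ≠ j then X i * X j / ((k:ℝ) - 1) else 0) := by
    unfold dotProduct Matrix.mulVec dotProduct
    refine Finset.sum_congr rfl fun i _ => ?_
    rw [Finset.mul_sum]
    refine Finset.sum_congr rfl fun j _ => ?_
    unfold FinHypergraph.adjMat
    by_cases hij : i = j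
    · simp [hij]
    · simp only [hij, if_false]
      rw [Finset.sum_mul, Finset.mul_sum, Finset.sum_filter]
      refine Finset.sum_congr rfl fun g hg => ?_
      by_cases hmem : i ∈ g ∧ j ∈ g
      · simp only [hmem, hij, if_true, and_true, ne_eq, not_false_eq_true]
        rw [hH g hg]
        field_simp
      · simp only [hmem, if_false]
        have : ¬ (i ∈ g ∧ j ∈ g ∧ i ≠ j) := fun ⟨h1, h2, _⟩ => hmem ⟨h1, h2⟩
        simp [this, hmem]
  rw [step1]
  have swap1 : ∀ i : Fin n, (∑ j, ∑ g ∈ H.edges,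
      (if i ∈ g ∧ j ∈ g ∧ i ≠ j then X i * X j / ((k:ℝ) - 1) else 0))
      = ∑ g ∈ H.edges, ∑ j, (if i ∈ g ∧ j ∈ g ∧ i ≠ j then X i * X j / ((k:ℝ) - 1) else 0) :=
    fun i => Finset.sum_comm
  simp only [swap1]
  rw [Finset.sum_comm]
  refine Finset.sum_congr rfl fun g hg => ?_
  have inner1 : ∀ i : Fin n, (∑ j, (if i ∈ g ∧ j ∈ g ∧ i ≠ j then X i * X j / ((k:ℝ) - 1) else 0))
      = if i ∈ g then (∑ j ∈ g, X i * X j / ((k:ℝ) - 1)) - X i * X i / ((k:ℝ) - 1) else 0 := by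
    intro i
    by_cases hi : i ∈ g
    · simp only [hi, true_and, if_true]
      rw [← Finset.sum_filter]
      have : Finset.filter (fun j => j ∈ g ∧ i ≠ j) Finset.univ = g.erase i := by
        ext j
        simp [Finset.mem_erase, and_comm, eq_comm, ne_eq]
      rw [this, Finset.sum_erase_eq_sub hi]
    · simp [hi]
  simp only [inner1]
  rw [← Finset.sum_filter]
  have : Finset.filter (fun i => i ∈ g) Finset.univ = g := by ext i; simp
  rw [this, Finset.sum_sub_distrib]
  rw [show (∑ i ∈ g, ∑ j ∈ g, X i * X j / ((k:ℝ) - 1))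
      = (∑ i ∈ g, X i) * (∑ j ∈ g, X j) / ((k:ℝ) - 1) by
    rw [Finset.sum_mul_sum, Finset.sum_div]
    exact Finset.sum_congr rfl fun i _ => by rw [Finset.sum_div]]
  rw [sub_div, sq]
  congr 1
  rw [Finset.sum_div]
  exact Finset.sum_congr rfl fun i _ => by rw [sq]

end Aux

/-- edge-switching with strict inequalities gives `ρ(G) < ρ(G')`. -/
theorem stmt7 {n k r : ℕ} (hk : 2 ≤ k) (hr1 : 1 ≤ r) (hrk : r ≤ k - 1)
    (G G' : FinHypergraph n) (huni : G.IsUniform k) (huni' : G'.IsUniform k)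
    (hconn : G.Connected) (hconn' : G'.Connected)
    (e f : Finset (Fin n)) (he : e ∈ G.edges) (hf : f ∈ G.edges) (hef : e ≠ f)
    (U1 V1 : Finset (Fin n)) (hU1 : U1 ⊆ e) (hV1 : V1 ⊆ f)
    (hU1card : U1.card = r) (hV1card : V1.card = r)
    (henew : (e \ U1) ∪ V1 ∉ G.edges) (hfnew : (f \ V1) ∪ U1 ∉ G.edges)
    (hnewne : (e \ U1) ∪ V1 ≠ (f \ V1) ∪ U1)
    (hG' : G'.edges = (G.edges \ {e, f}) ∪ {(e \ U1) ∪ V1, (f \ V1) ∪ U1})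
    (X : Fin n → ℝ) (hpos : ∀ i, 0 < X i) (hunit : ∑ i, X i ^ 2 = 1)
    (hX : G.adjMat *ᵥ X = specRad G.adjMat • X)
    (hU1gt : (∑ v ∈ V1, X v) < (∑ v ∈ U1, X v))
    (hU2lt : (∑ v ∈ e \ U1, X v) < (∑ v ∈ f \ V1, X v)) :
    specRad G.adjMat < specRad G'.adjMat :=  by
  classical
  set e' : Finset (Fin n) := (e \ U1) ∪ V1 with he'
  set f' : Finset (Fin n) := (f \ V1) ∪ U1 with hf'
  set F : Finset (Fin n) → ℝ :=
    fun g => (((∑ v ∈ g, X v)^2 - ∑ v ∈ g, X v^2) / ((k:ℝ) - 1)) with hF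
  have hkpos : (0:ℝ) < (k:ℝ) - 1 := by
    have : (2:ℝ) ≤ (k:ℝ) := by exact_mod_cast hk
    linarith
  -- e' and f' are edges of G'
  have he'G' : e' ∈ G'.edges := by
    rw [hG']
    exact Finset.mem_union_right _ (Finset.mem_insert_self _ _)
  have hf'G' : f' ∈ G'.edges := by
    rw [hG']
    exact Finset.mem_union_right _ (Finset.mem_insert_of_mem (Finset.mem_singleton_self _))
  -- disjointness facts
  have hcard_eU1 : (e \ U1).card = k - r := by
    rw [Finset.card_sdiff_of_subset hU1, huni e he, hU1card]
  have hcard_fV1 : (f \ V1).card = k - r := by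
    rw [Finset.card_sdiff_of_subset hV1, huni f hf, hV1card]
  have hrk' : r ≤ k := le_trans hrk (Nat.sub_le k 1)
  have hdisj_e' : Disjoint (e \ U1) V1 := by
    have h1 : (e' : Finset (Fin n)).card = k := huni' e' he'G'
    have h2 := Finset.card_union_add_card_inter (e \ U1) V1
    rw [← he', h1, hcard_eU1, hV1card] at h2
    rw [Finset.disjoint_iff_inter_eq_empty, ← Finset.card_eq_zero]
    omega
  have hdisj_f' : Disjoint (f \ V1) U1 := by
    have h1 : (f' : Finset (Fin n)).card = k := huni' f' hf'G'
    have h2 := Finset.card_union_add_card_inter (f \ V1) U1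
    rw [← hf', h1, hcard_fV1, hU1card] at h2
    rw [Finset.disjoint_iff_inter_eq_empty, ← Finset.card_eq_zero]
    omega
  -- vertex sums
  set a := ∑ v ∈ U1, X v
  set b := ∑ v ∈ e \ U1, X v
  set c := ∑ v ∈ V1, X v
  set d := ∑ v ∈ f \ V1, X v
  set Qa := ∑ v ∈ U1, X v ^ 2
  set Qb := ∑ v ∈ e \ U1, X v ^ 2
  set Qc := ∑ v ∈ V1, X v ^ 2
  set Qd := ∑ v ∈ f \ V1, X v ^ 2
  have hse : ∑ v ∈ e, X v = b + a := (Finset.sum_sdiff hU1).symm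
  have hsf : ∑ v ∈ f, X v = d + c := (Finset.sum_sdiff hV1).symm
  have hqe : ∑ v ∈ e, X v ^ 2 = Qb + Qa := (Finset.sum_sdiff hU1).symm
  have hqf : ∑ v ∈ f, X v ^ 2 = Qd + Qc := (Finset.sum_sdiff hV1).symm
  have hse' : ∑ v ∈ e', X v = b + c := Finset.sum_union hdisj_e'
  have hsf' : ∑ v ∈ f', X v = d + a := Finset.sum_union hdisj_f'
  have hqe' : ∑ v ∈ e', X v ^ 2 = Qb + Qc := Finset.sum_union hdisj_e'
  have hqf' : ∑ v ∈ f', X v ^ 2 = Qd + Qa := Finset.sum_union hdisj_f'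
  -- quadratic forms
  have hQG : X ⬝ᵥ (G.adjMat *ᵥ X) = ∑ g ∈ G.edges, F g := quadform G huni X
  have hQG' : X ⬝ᵥ (G'.adjMat *ᵥ X) = ∑ g ∈ G'.edges, F g := quadform G' huni' X
  -- edge-sum decomposition
  have hsub : ({e, f} : Finset (Finset (Fin n))) ⊆ G.edges := by
    intro g hg
    rcases Finset.mem_insert.1 hg with h | h
    · exact h ▸ he
    · exact (Finset.mem_singleton.1 h) ▸ hf
  have hdisjE : Disjoint (G.edges \ {e, f}) ({e', f'} : Finset (Finset (Fin n))) := by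
    rw [Finset.disjoint_left]
    intro g hg hg'
    have hgE : g ∈ G.edges := (Finset.mem_sdiff.1 hg).1
    rcases Finset.mem_insert.1 hg' with h | h
    · exact henew (h ▸ hgE)
    · exact hfnew ((Finset.mem_singleton.1 h) ▸ hgE)
  have hsum' : ∑ g ∈ G'.edges, F g
      = (∑ g ∈ G.edges, F g) - (F e + F f) + (F e' + F f') := by
    rw [hG', Finset.sum_union hdisjE, Finset.sum_sdiff_eq_sub hsub,
      Finset.sum_pair hef, Finset.sum_pair hnewne]
  -- ρ(G) equals the Rayleigh quotient of X
  have hrho : specRad G.adjMat = X ⬝ᵥ (G.adjMat *ᵥ X) := by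
    rw [hX, dotProduct_smul, smul_eq_mul]
    have : X ⬝ᵥ X = 1 := by
      rw [← hunit]
      exact Finset.sum_congr rfl fun i _ => (sq (X i)).symm
    rw [this, mul_one]
  -- the strict increase
  have hdiff : (0:ℝ) < F e' + F f' - (F e + F f) := by
    have hnum : (0:ℝ) < ((b + c)^2 - (Qb + Qc)) + ((d + a)^2 - (Qd + Qa))
        - (((b + a)^2 - (Qb + Qa)) + ((d + c)^2 - (Qd + Qc))) := by
      nlinarith [hU1gt, hU2lt]
    have : F e' + F f' - (F e + F f)
        = (((b + c)^2 - (Qb + Qc)) + ((d + a)^2 - (Qd + Qa))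
          - (((b + a)^2 - (Qb + Qa)) + ((d + c)^2 - (Qd + Qc)))) / ((k:ℝ) - 1) := by
      simp only [hF, hse, hsf, hqe, hqf, hse', hsf', hqe', hqf']
      field_simp
    rw [this]
    exact div_pos hnum hkpos
  have hlt : X ⬝ᵥ (G.adjMat *ᵥ X) < X ⬝ᵥ (G'.adjMat *ᵥ X) := by
    rw [hQG, hQG', hsum']
    linarith
  have hfinal : X ⬝ᵥ (G'.adjMat *ᵥ X) ≤ specRad G'.adjMat :=
    rayleigh_le_specRad _ (adj_isHermitian G') X hunit
  calc specRad G.adjMat = X ⬝ᵥ (G.adjMat *ᵥ X) := hrho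
  _ < X ⬝ᵥ (G'.adjMat *ᵥ X) := hlt
  _ ≤ specRad G'.adjMat := hfinal
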